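/- For every positive integer k there exists a tree on 9k+2 vertices with at least 48^k maximal irredundant sets. Consequently the growth rate of the maximum number of maximal irredundant sets over trees of order n is at least 48^{1/9} ≈ 1.53746. -/

import Mathlib

/-!
Take a vertex `s₁` with a pendant neighbour `s₂`, joined to the centres of `k` spiders with four
legs of length two, and let `s₁ ∈ S`. If `s₂ ∈ S` then `s₂` has no private neighbour; otherwise
`s₂` is a private neighbour of `s₁`, and a spider vertex of `S` can only find a private neighbour
among the non-central vertices of its own spider, since `s₁` and the centres all see `s₁`. So `S`
is maximal irredundant as soon as its trace on every spider is a maximal set admitting such local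
private neighbours, and a finite check shows that one spider has 48 of these. This gives `48 ^ k`
maximal irredundant sets in a tree on `9k + 2` vertices, whence the growth rate is at least
`48 ^ (1 / 9)`.
-/

/-- `S` is an irredundant set of `G` : every vertex of `S` has a private neighbor,
i.e. a vertex `u` whose closed neighborhood meets `S` exactly in `v`. -/
def Irredundant {V : Type*} (G : SimpleGraph V) (S : Set V) : Prop :=
  ∀ v ∈ S, ∃ u : V, (insert u (G.neighborSet u)) ∩ S = {v}

/-- a maximal irredundant set: an irredundant set not strictly contained in another
irredundant set. -/
def MaximalIrredundant {V : Type*} (G : SimpleGraph V) (S : Set V) : Prop :=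
  Irredundant G S ∧ ∀ S' : Set V, S ⊂ S' → ¬ Irredundant G S'

open Filter Topology

section Irredundance

variable {V W : Type*} {G : SimpleGraph V} {H : SimpleGraph W}

def closedNbhd (G : SimpleGraph V) (u : V) : Set V := insert u (G.neighborSet u)

@[simp] lemma mem_closedNbhd {u x : V} : x ∈ closedNbhd G u ↔ x = u ∨ G.Adj u x := Iff.rfl

lemma irredundant_iff {S : Set V} :
    Irredundant G S ↔ ∀ v ∈ S, ∃ u, closedNbhd G u ∩ S = {v} := Iff.rfl

lemma inter_eq_singleton_of_subset {A S T : Set V} {v : V} (h : A ∩ S = {v}) (hTS : T ⊆ S)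
    (hv : v ∈ T) : A ∩ T = {v} := by
  rw [← Set.inter_eq_right.mpr hTS, ← Set.inter_assoc, h, Set.singleton_inter_of_mem hv]

lemma Irredundant.mono {S T : Set V} (h : Irredundant G S) (hTS : T ⊆ S) : Irredundant G T :=
  fun v hv => (h v (hTS hv)).imp fun _ hu => inter_eq_singleton_of_subset hu hTS hv

lemma maximalIrredundant_iff_maximal {S : Set V} :
    MaximalIrredundant G S ↔ Maximal (Irredundant G) S := by
  rw [maximal_iff_forall_gt, MaximalIrredundant]

lemma maximalIrredundant_iff_forall_insert {S : Set V} :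
    MaximalIrredundant G S ↔ Irredundant G S ∧ ∀ x ∉ S, ¬ Irredundant G (insert x S) := by
  rw [maximalIrredundant_iff_maximal,
    Set.maximal_iff_forall_insert fun _ _ => Irredundant.mono]

lemma closedNbhd_iso (φ : G ≃g H) (u : V) : closedNbhd H (φ u) = φ '' closedNbhd G u := by
  ext x
  obtain ⟨x, rfl⟩ := φ.surjective x
  simp [φ.injective.eq_iff, φ.map_adj_iff]

lemma irredundant_image_iff (φ : G ≃g H) {S : Set V} :
    Irredundant H (φ '' S) ↔ Irredundant G S := by
  simp only [irredundant_iff, Set.forall_mem_image, φ.surjective.exists, closedNbhd_iso,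
    ← Set.image_inter φ.injective, ← Set.image_singleton, Set.image_eq_image φ.injective]

lemma card_maximalIrredundant_congr (φ : G ≃g H) :
    Nat.card {S // MaximalIrredundant G S} = Nat.card {S // MaximalIrredundant H S} := by
  let e : Set V ≃o Set W := φ.toEquiv.toOrderIsoSet
  have he : ∀ S, Irredundant H (e S) ↔ Irredundant G S := fun _ => irredundant_image_iff φ
  refine Nat.card_congr (e.toEquiv.subtypeEquiv fun S => ?_)
  have he' : ∀ S T, e S ⊆ e T ↔ S ⊆ T := fun _ _ => e.le_iff_le
  simp only [maximalIrredundant_iff_maximal, Maximal, OrderIso.coe_toEquiv, e.surjective.forall,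
    he, he']

end Irredundance

section ParentGraph

variable {V : Type*} {p : V → V} {rk : V → ℕ} {root : V}

def parentGraph (p : V → V) : SimpleGraph V := SimpleGraph.fromRel fun u v => p u = v

lemma parentGraph_adj {u v : V} : (parentGraph p).Adj u v ↔ u ≠ v ∧ (p u = v ∨ p v = u) :=
  Iff.rfl

instance [DecidableEq V] : DecidableRel (parentGraph p).Adj :=
  fun _ _ => decidable_of_iff _ parentGraph_adj.symm

lemma parentGraph_adj_parent (hrk : ∀ v ≠ root, rk (p v) < rk v) {v : V} (hv : v ≠ root) :
    (parentGraph p).Adj v (p v) :=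
  ⟨fun h => (hrk v hv).ne' (congrArg rk h), Or.inl rfl⟩

lemma reachable_root_parentGraph (hrk : ∀ v ≠ root, rk (p v) < rk v) (v : V) :
    (parentGraph p).Reachable v root := by
  induction hn : rk v using Nat.strong_induction_on generalizing v with
  | _ n ih =>
    by_cases hv : v = root
    · rw [hv]
    · exact (parentGraph_adj_parent hrk hv).reachable.trans (ih _ (hn ▸ hrk v hv) _ rfl)

lemma rank_iterate_le (hroot : p root = root) (hrk : ∀ v ≠ root, rk (p v) < rk v) (n : ℕ)
    (v : V) : rk (p^[n] v) ≤ rk v := by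
  induction n generalizing v with
  | zero => rfl
  | succ n ih =>
    refine (ih (p v)).trans ?_
    by_cases hv : v = root
    · rw [hv, hroot]
    · exact (hrk v hv).le

lemma isBridge_parentGraph (hroot : p root = root) (hrk : ∀ v ≠ root, rk (p v) < rk v) {v : V}
    (hv : v ≠ root) : (parentGraph p).IsBridge s(v, p v) := by
  -- once the edge to its parent is deleted, no edge leaves the set of descendants of `v`
  let IsDesc (x : V) : Prop := ∃ n, p^[n] x = v
  have hstep : ∀ a b, ((parentGraph p).deleteEdges {s(v, p v)}).Adj a b →
      IsDesc a → IsDesc b := by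
    intro a b hadj ⟨n, hn⟩
    rw [SimpleGraph.deleteEdges_adj, parentGraph_adj, Set.mem_singleton_iff] at hadj
    obtain ⟨⟨-, hpa | hpb⟩, hne⟩ := hadj
    · cases n with
      | zero => exact absurd (by rw [← hpa, ← hn]; rfl) hne
      | succ m => exact ⟨m, by rwa [Function.iterate_succ_apply, hpa] at hn⟩
    · exact ⟨n + 1, by rwa [Function.iterate_succ_apply, hpb]⟩
  have hparent : ¬ IsDesc (p v) := by
    rintro ⟨n, hn⟩
    have := rank_iterate_le hroot hrk n (p v)
    rw [hn] at this
    exact (hrk v hv).not_ge this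
  rw [SimpleGraph.isBridge_iff, SimpleGraph.reachable_iff_reflTransGen]
  suffices ∀ w, Relation.ReflTransGen _ v w → IsDesc w from fun h => hparent (this _ h)
  intro w h
  induction h with
  | refl => exact ⟨0, rfl⟩
  | tail _ hab ih => exact hstep _ _ hab ih

lemma isTree_parentGraph (hroot : p root = root) (hrk : ∀ v ≠ root, rk (p v) < rk v) :
    (parentGraph p).IsTree := by
  have : Nonempty V := ⟨root⟩
  refine ⟨?_, SimpleGraph.isAcyclic_iff_forall_adj_isBridge.mpr ?_⟩
  · exact (SimpleGraph.connected_iff_exists_forall_reachable _).mpr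
      ⟨root, fun v => (reachable_root_parentGraph hrk v).symm⟩
  · rintro v w ⟨hvw, rfl | rfl⟩
    · exact isBridge_parentGraph hroot hrk fun h => hvw (by rw [h, hroot])
    · rw [Sym2.eq_swap]
      exact isBridge_parentGraph hroot hrk fun h => hvw (by rw [h, hroot])

end ParentGraph

namespace SpiderTree

/-- The spider with centre `0` and legs `0 - j - (j + 4)` for `j = 1, …, 4`. -/
def spiderParent : Fin 9 → Fin 9 := ![0, 0, 0, 0, 0, 1, 2, 3, 4]

abbrev spider : SimpleGraph (Fin 9) := parentGraph spiderParent

/-- The centre is excluded as a private neighbour: in the tree it is adjacent to `s₁ ∈ S`. -/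
def SpiderIrredundant (L : Finset (Fin 9)) : Prop :=
  ∀ v ∈ L, ∃ u ≠ 0, closedNbhd spider u ∩ ↑L = {v}

lemma SpiderIrredundant.mono ⦃L M : Finset (Fin 9)⦄ (h : SpiderIrredundant M) (hLM : L ⊆ M) :
    SpiderIrredundant L := fun v hv =>
  (h v (hLM hv)).imp fun _ ⟨hu0, hu⟩ =>
    ⟨hu0, inter_eq_singleton_of_subset hu (Finset.coe_subset.mpr hLM) hv⟩

instance : DecidablePred SpiderIrredundant := fun L =>
  decidable_of_iff (∀ v ∈ L, ∃ u ≠ 0, ∀ x, (x = u ∨ spider.Adj u x) ∧ x ∈ L ↔ x = v) <|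
    by
    simp only [SpiderIrredundant, Set.ext_iff, Set.mem_inter_iff, mem_closedNbhd, Finset.mem_coe,
      Set.mem_singleton_iff]

instance : DecidablePred (Maximal SpiderIrredundant) := fun _ =>
  decidable_of_iff _ (Finset.maximal_iff_forall_insert SpiderIrredundant.mono).symm

lemma card_maximal_spiderIrredundant : Fintype.card {L // Maximal SpiderIrredundant L} = 48 := by
  decide +kernel

/-- `inl 0` is `s₁`, `inl 1` is its pendant neighbour `s₂`, and `inr (i, j)` is vertex `j` of
the `i`-th spider. -/
abbrev Vertex (k : ℕ) := Fin 2 ⊕ Fin k × Fin 9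

variable {k : ℕ}

def treeParent : Vertex k → Vertex k
  | .inl _ => .inl 0
  | .inr (i, j) => if j = 0 then .inl 0 else .inr (i, spiderParent j)

abbrev tree (k : ℕ) : SimpleGraph (Vertex k) := parentGraph treeParent

def treeRank : Vertex k → ℕ
  | .inl t => t
  | .inr (_, j) => ![1, 2, 2, 2, 2, 3, 3, 3, 3] j

lemma treeRank_lt : ∀ v ≠ .inl 0, treeRank (treeParent v : Vertex k) < treeRank v := by
  rintro (t | ⟨i, j⟩) hv
  · fin_cases t
    · exact absurd rfl hv
    · simp [treeParent, treeRank]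
  · by_cases hj : j = 0
    · simp [treeParent, treeRank, hj]
    · simp only [treeParent, treeRank, if_neg hj]
      clear hv
      revert j
      decide

lemma isTree_tree (k : ℕ) : (tree k).IsTree := isTree_parentGraph rfl treeRank_lt

@[simp] lemma tree_adj_inl_inl {a b : Fin 2} : (tree k).Adj (.inl a) (.inl b) ↔ a ≠ b := by
  rw [parentGraph_adj]; simp [treeParent]; omega

@[simp] lemma tree_adj_inl_inr {a : Fin 2} {i : Fin k} {j : Fin 9} :
    (tree k).Adj (.inl a) (.inr (i, j)) ↔ a = 0 ∧ j = 0 := by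
  rw [parentGraph_adj]; by_cases hj : j = 0 <;> simp [treeParent, hj, eq_comm]

@[simp] lemma tree_adj_inr_inl {a : Fin 2} {i : Fin k} {j : Fin 9} :
    (tree k).Adj (.inr (i, j)) (.inl a) ↔ a = 0 ∧ j = 0 := by
  rw [SimpleGraph.adj_comm, tree_adj_inl_inr]

@[simp] lemma tree_adj_inr_inr {i i' : Fin k} {u x : Fin 9} :
    (tree k).Adj (.inr (i, u)) (.inr (i', x)) ↔ i = i' ∧ spider.Adj u x := by
  have h0 : spiderParent 0 = 0 := rfl
  rw [parentGraph_adj, parentGraph_adj]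
  by_cases hu : u = 0 <;> by_cases hx : x = 0 <;> simp [treeParent, hu, hx, h0, Prod.ext_iff] <;>
    aesop

def glue (L : Fin k → Finset (Fin 9)) : Set (Vertex k)
  | .inl t => t = 0
  | .inr (i, j) => j ∈ L i

variable {L : Fin k → Finset (Fin 9)}

@[simp] lemma inl_mem_glue {t : Fin 2} : .inl t ∈ glue L ↔ t = 0 := Iff.rfl

@[simp] lemma inr_mem_glue {i : Fin k} {j : Fin 9} : .inr (i, j) ∈ glue L ↔ j ∈ L i := Iff.rfl

lemma closedNbhd_inr_inter_glue {i : Fin k} {u : Fin 9} (hu : u ≠ 0) :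
    closedNbhd (tree k) (.inr (i, u)) ∩ glue L =
      (fun j => .inr (i, j)) '' (closedNbhd spider u ∩ ↑(L i)) := by
  ext (t | ⟨i', j⟩)
  · simp [hu]
  · simp only [Set.mem_inter_iff, mem_closedNbhd, tree_adj_inr_inr, inr_mem_glue, Set.mem_image,
      Finset.mem_coe]
    aesop

lemma inl_zero_mem_closedNbhd_inl (t : Fin 2) : .inl 0 ∈ closedNbhd (tree k) (.inl t) := by
  fin_cases t <;> simp

lemma exists_private_inr_iff {i : Fin k} {j : Fin 9} :
    (∃ u, closedNbhd (tree k) u ∩ glue L = {.inr (i, j)}) ↔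
      ∃ u ≠ 0, closedNbhd spider u ∩ ↑(L i) = {j} := by
  have hinj : Function.Injective fun j : Fin 9 => (.inr (i, j) : Vertex k) :=
    fun _ _ h => by simpa using h
  have hsingle : ({.inr (i, j)} : Set (Vertex k)) = (fun j => .inr (i, j)) '' {j} :=
    (Set.image_singleton (f := fun j => (.inr (i, j) : Vertex k))).symm
  constructor
  · rintro ⟨t | ⟨i', u⟩, hu⟩
    · have : .inl 0 ∈ closedNbhd (tree k) (.inl t) ∩ glue L :=
        ⟨inl_zero_mem_closedNbhd_inl t, rfl⟩
      simp [hu] at this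
    by_cases hu0 : u = 0
    · have : .inl 0 ∈ closedNbhd (tree k) (.inr (i', u)) ∩ glue L := ⟨by simp [hu0], rfl⟩
      simp [hu] at this
    rw [closedNbhd_inr_inter_glue hu0] at hu
    obtain rfl : i' = i := by
      obtain ⟨_, -, h⟩ := (Set.ext_iff.mp hu _).mpr rfl
      simp_all
    rw [hsingle, hinj.image_injective.eq_iff] at hu
    exact ⟨u, hu0, hu⟩
  · rintro ⟨u, hu0, hu⟩
    exact ⟨.inr (i, u), by rw [closedNbhd_inr_inter_glue hu0, hu, hsingle]⟩

lemma irredundant_glue_iff : Irredundant (tree k) (glue L) ↔ ∀ i, SpiderIrredundant (L i) := by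
  rw [irredundant_iff]
  constructor
  · intro h i j hj
    exact exists_private_inr_iff.mp (h _ hj)
  · rintro h (t | ⟨i, j⟩) hv
    · obtain rfl : t = 0 := hv
      refine ⟨.inl 1, ?_⟩
      ext (t | ⟨i, j⟩)
      · fin_cases t <;> simp
      · simp
    · exact exists_private_inr_iff.mpr (h i j hv)

lemma not_irredundant_insert_inl_one : ¬ Irredundant (tree k) (insert (.inl 1) (glue L)) := by
  intro h
  obtain ⟨u, hu⟩ := irredundant_iff.mp h (.inl 1) (Set.mem_insert _ _)
  obtain ⟨t, rfl⟩ : ∃ t, u = .inl t := by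
    rcases u with t | ⟨i, x⟩
    · exact ⟨t, rfl⟩
    · simpa using ((Set.ext_iff.mp hu _).mpr rfl).1
  have := (Set.ext_iff.mp hu (.inl 0)).mp
    ⟨inl_zero_mem_closedNbhd_inl t, Set.mem_insert_of_mem _ rfl⟩
  simp at this

lemma insert_inr_glue {i : Fin k} {j : Fin 9} :
    insert (.inr (i, j)) (glue L) = glue (Function.update L i (insert j (L i))) := by
  ext (t | ⟨i', j'⟩)
  · simp
  · by_cases hi : i' = i
    · subst hi; simp
    · simp [hi]

lemma maximalIrredundant_glue (hL : ∀ i, Maximal SpiderIrredundant (L i)) :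
    MaximalIrredundant (tree k) (glue L) := by
  rw [maximalIrredundant_iff_forall_insert, irredundant_glue_iff]
  refine ⟨fun i => (hL i).prop, ?_⟩
  rintro (t | ⟨i, j⟩) hx
  · obtain rfl : t = 1 := by fin_cases t <;> simp_all
    exact not_irredundant_insert_inl_one
  · rw [insert_inr_glue, irredundant_glue_iff]
    intro h
    refine ((Finset.maximal_iff_forall_insert SpiderIrredundant.mono).mp (hL i)).2 j hx ?_
    simpa using h i

lemma card_maximalIrredundant_tree (k : ℕ) :
    48 ^ k ≤ Nat.card {S // MaximalIrredundant (tree k) S} := by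
  let f (c : Fin k → {L // Maximal SpiderIrredundant L}) : {S // MaximalIrredundant (tree k) S} :=
    ⟨glue fun i => c i, maximalIrredundant_glue fun i => (c i).2⟩
  have hf : Function.Injective f := by
    intro c c' h
    funext i
    ext j
    simpa [f] using Set.ext_iff.mp (congrArg Subtype.val h) (.inr (i, j))
  calc 48 ^ k = Nat.card (Fin k → {L // Maximal SpiderIrredundant L}) := by
        simp [Nat.card_eq_fintype_card, card_maximal_spiderIrredundant]
    _ ≤ _ := Nat.card_le_card_of_injective f hf

theorem exists_tree_card_maximalIrredundant (k : ℕ) :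
    ∃ T : SimpleGraph (Fin (9 * k + 2)), T.Connected ∧ T.IsAcyclic ∧
      48 ^ k ≤ Nat.card {S : Set (Fin (9 * k + 2)) // MaximalIrredundant T S} := by
  let e : Vertex k ≃ Fin (9 * k + 2) := Fintype.equivFinOfCardEq (by simp; ring)
  let φ := SimpleGraph.Iso.map e (tree k)
  have hT := φ.isTree_iff.mp (isTree_tree k)
  exact ⟨_, hT.connected, hT.isAcyclic,
    (card_maximalIrredundant_tree k).trans (card_maximalIrredundant_congr φ).le⟩

end SpiderTree

def treeMaximalIrredundantCounts (n : ℕ) : Set ℕ :=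
  {m | ∃ T : SimpleGraph (Fin n), T.Connected ∧ T.IsAcyclic ∧
    m = Nat.card {S : Set (Fin n) // MaximalIrredundant T S}}

lemma card_maximalIrredundant_le_two_pow {n : ℕ} (T : SimpleGraph (Fin n)) :
    Nat.card {S : Set (Fin n) // MaximalIrredundant T S} ≤ 2 ^ n :=
  calc Nat.card {S : Set (Fin n) // MaximalIrredundant T S}
      ≤ Nat.card (Set (Fin n)) := Nat.card_le_card_of_injective _ Subtype.val_injective
    _ = 2 ^ n := by simp [Nat.card_eq_fintype_card]

lemma two_pow_mem_upperBounds_treeMaximalIrredundantCounts (n : ℕ) :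
    2 ^ n ∈ upperBounds (treeMaximalIrredundantCounts n) :=
  fun _ ⟨T, _, _, hm⟩ => hm ▸ card_maximalIrredundant_le_two_pow T

lemma sSup_treeMaximalIrredundantCounts_rpow_le_two (n : ℕ) :
    ((sSup (treeMaximalIrredundantCounts n) : ℕ) : ℝ) ^ ((1 : ℝ) / n) ≤ 2 := by
  rcases Nat.eq_zero_or_pos n with rfl | hn
  · simp
  have hle : ((sSup (treeMaximalIrredundantCounts n) : ℕ) : ℝ) ≤ 2 ^ n := by
    exact_mod_cast csSup_le' (two_pow_mem_upperBounds_treeMaximalIrredundantCounts n)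
  calc ((sSup (treeMaximalIrredundantCounts n) : ℕ) : ℝ) ^ ((1 : ℝ) / n)
      ≤ ((2 : ℝ) ^ n) ^ ((1 : ℝ) / n) := Real.rpow_le_rpow (by positivity) hle (by positivity)
    _ = 2 := by
        rw [← Real.rpow_natCast, ← Real.rpow_mul (by norm_num),
          mul_one_div_cancel (by positivity), Real.rpow_one]

lemma rpow_le_sSup_treeMaximalIrredundantCounts_rpow (k : ℕ) :
    (48 : ℝ) ^ ((k : ℝ) / (9 * k + 2)) ≤
      ((sSup (treeMaximalIrredundantCounts (9 * k + 2)) : ℕ) : ℝ) ^ ((1 : ℝ) / ↑(9 * k + 2)) := by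
  obtain ⟨T, hc, ha, hT⟩ := SpiderTree.exists_tree_card_maximalIrredundant k
  have hle : 48 ^ k ≤ sSup (treeMaximalIrredundantCounts (9 * k + 2)) := hT.trans <|
      le_csSup ⟨_, two_pow_mem_upperBounds_treeMaximalIrredundantCounts _⟩ ⟨T, hc, ha, rfl⟩
  calc (48 : ℝ) ^ ((k : ℝ) / (9 * k + 2))
      = ((48 ^ k : ℕ) : ℝ) ^ ((1 : ℝ) / ↑(9 * k + 2)) := by
        rw [Nat.cast_pow, ← Real.rpow_natCast, ← Real.rpow_mul (by norm_num)]
        push_cast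
        rw [mul_one_div]
    _ ≤ _ := Real.rpow_le_rpow (by positivity) (by exact_mod_cast hle) (by positivity)

lemma tendsto_rpow_div_nine_mul_add_two :
    Tendsto (fun k : ℕ => (48 : ℝ) ^ ((k : ℝ) / (9 * k + 2))) atTop
      (𝓝 ((48 : ℝ) ^ ((1 : ℝ) / 9))) := by
  refine tendsto_const_nhds.rpow ?_ (Or.inl (by norm_num))
  have h := (tendsto_natCast_div_add_atTop (2 / 9 : ℝ)).const_mul (1 / 9)
  rw [mul_one] at h
  refine h.congr fun k => ?_
  field_simp

lemma le_limsup_of_le_comp_of_tendsto {u g : ℕ → ℝ} {φ : ℕ → ℕ} {L : ℝ}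
    (hu : IsBoundedUnder (· ≤ ·) atTop u) (hφ : Tendsto φ atTop atTop)
    (hg : Tendsto g atTop (𝓝 L)) (hgu : ∀ k, g k ≤ u (φ k)) : L ≤ limsup u atTop := by
  refine le_of_forall_lt_imp_le_of_dense fun a ha => le_limsup_of_frequently_le ?_ hu
  exact hφ.frequently ((hg.eventually (eventually_ge_nhds ha)).mono fun k hk =>
    hk.trans (hgu k)).frequently

theorem stmt_15 :
    (∀ k : ℕ, 0 < k → ∃ T : SimpleGraph (Fin (9 * k + 2)),
      T.Connected ∧ T.IsAcyclic ∧
      48 ^ k ≤ Nat.card {S : Set (Fin (9 * k + 2)) // MaximalIrredundant T S}) ∧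
    (48 : ℝ) ^ ((1 : ℝ) / 9) ≤
      Filter.atTop.limsup (fun n : ℕ =>
        ((sSup {m : ℕ | ∃ T : SimpleGraph (Fin n), T.Connected ∧ T.IsAcyclic ∧
          m = Nat.card {S : Set (Fin n) // MaximalIrredundant T S}} : ℕ) : ℝ) ^
            ((1 : ℝ) / n)) := by
  refine ⟨fun k _ => SpiderTree.exists_tree_card_maximalIrredundant k, ?_⟩
  exact le_limsup_of_le_comp_of_tendsto
    (isBoundedUnder_of ⟨2, sSup_treeMaximalIrredundantCounts_rpow_le_two⟩)
    (tendsto_atTop_mono (fun k => show k ≤ 9 * k + 2 by omega) tendsto_id)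
    tendsto_rpow_div_nine_mul_add_two rpow_le_sSup_treeMaximalIrredundantCounts_rpow
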